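/- Fix δ ∈ (0,1/2) and k ≥ 1. Consider the protocol on the k-ary tree of depth t with binary messages M = {0,1} in which each leaf forwards its private signal (σ_i = x_i), each internal node (including the root) outputs the majority value of the k messages received from its children with ties broken uniformly at random. Then there exists a constant c > 0 (depending on δ and k) such that the probability of error satisfies P(σ_root ≠ s) ≤ exp(−c·⌊(k+1)/2⌋^t) for all sufficiently large t. -/

import Mathlib

/-!
Decentralized binary hypothesis testing on a `k`-ary tree with binary messages.
The majority protocol: each leaf forwards its private signal, each internal node
(including the root) outputs the majority of the `k` messages received from its
children, ties being broken uniformly at random.  We formalize: the error probability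
is at most `exp (-c ⌊(k+1)/2⌋ ^ depth)` for sufficiently large depth.
-/

/-- A randomized decision rule ("kernel") from `α` to `β`. -/
def IsKernel {α β : Type} [Fintype β] (K : α → β → ℝ) : Prop :=
  ∀ a, (∀ b, 0 ≤ K a b) ∧ ∑ b, K a b = 1

/-- A (possibly node-dependent, randomized) rule vector on the `k`-ary tree. -/
inductive RuleTree (X M : Type) (k : ℕ) : ℕ → Type
  | leaf (g : X → M → ℝ) : RuleTree X M k 0
  | node {t : ℕ} (f : (Fin k → M) → M → ℝ) (c : Fin k → RuleTree X M k t) :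
      RuleTree X M k (t + 1)

/-- `msgDist p T μ`: probability that the root of subtree `T` sends message `μ`,
when the leaves receive i.i.d. private signals with distribution `p`. -/
noncomputable def msgDist {X M : Type} [Fintype X] [Fintype M] {k : ℕ} (p : X → ℝ) :
    {t : ℕ} → RuleTree X M k t → M → ℝ
  | _, .leaf g, μ => ∑ x, p x * g x μ
  | _, .node f c, μ => ∑ σ : Fin k → M, (∏ i, msgDist p (c i) (σ i)) * f σ μ

/-- Distribution of a binary private signal given the state of the world `s`. -/
noncomputable def pSig (δ : ℝ) (s : Bool) : Bool → ℝ := fun x => if x = s then 1 - δ else δ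

/-- Root error probability (uniform prior on the state of the world), for the protocol
with root rule `h` applied to the messages of its `k` children, each of which is the
root of a rule tree of depth `t` (total depth `t + 1`). -/
noncomputable def rootErr {M : Type} [Fintype M] {k : ℕ} (δ : ℝ) (t : ℕ)
    (h : (Fin k → M) → Bool → ℝ) (c : Fin k → RuleTree Bool M k t) : ℝ :=
  (1 / 2) * (∑ σ : Fin k → M, (∏ i, msgDist (pSig δ false) (c i) (σ i)) * h σ true) +
  (1 / 2) * (∑ σ : Fin k → M, (∏ i, msgDist (pSig δ true) (c i) (σ i)) * h σ false)

/-- Majority decision rule with ties broken uniformly at random, as a randomized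
kernel: output the majority value of the `k` input bits; on a tie output a fair coin. -/
noncomputable def majKernel (k : ℕ) : (Fin k → Bool) → Bool → ℝ := fun σ b =>
  let c := (Finset.univ.filter fun i => σ i = true).card
  if k < 2 * c then (if b = true then 1 else 0)
  else if 2 * c < k then (if b = false then 1 else 0)
  else 1 / 2

/-- The majority protocol tree: each leaf forwards its private signal
(`σ_i = x_i`, a deterministic kernel), and each internal node applies the
majority rule with random tie-breaking. -/
noncomputable def majTree (k : ℕ) : (t : ℕ) → RuleTree Bool Bool k t
  | 0 => .leaf fun x b => if b = x then 1 else 0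
  | t + 1 => .node (majKernel k) (fun _ => majTree k t)

/-!
The message of a node at height `t` is wrong with probability `e t`, where `e 0 = δ` and
`e (t + 1) = F (e t)` for `F q` the error of a majority vote over `k` independent inputs that
are each wrong with probability `q`. Pairing every input pattern with its complement shows
that majority does at least as well as the dictator rule, so `F q ≤ q`; for `k ≥ 3` the gain
on the patterns with a single dissenting input gives `F q ≤ (1 - γ) q` on `[0, δ]` for some
`γ > 0`, so `e t → 0`. Since majority errs only if `⌈k/2⌉ = ⌊(k+1)/2⌋` inputs do,
`F q ≤ 2 ^ k q ^ ⌈k/2⌉`, and once `e` is small this multiplies the exponent of `e` by `⌈k/2⌉`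
at every level. For `k ≤ 2` the claim is just `e t ≤ δ`.
-/

open Finset Filter Topology Real

lemma pow_mul_pow_le_pow_mul_pow {R : Type*} [CommSemiring R] [PartialOrder R] [IsOrderedRing R]
    {a b : R} (ha : 0 ≤ a) (hab : a ≤ b) {m n : ℕ} (hmn : m ≤ n) :
    a ^ n * b ^ m ≤ a ^ m * b ^ n := by
  obtain ⟨d, rfl⟩ := Nat.exists_eq_add_of_le hmn
  have hb : 0 ≤ b := ha.trans hab
  calc a ^ (m + d) * b ^ m = a ^ m * b ^ m * a ^ d := by ring
    _ ≤ a ^ m * b ^ m * b ^ d := by gcongr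
    _ = a ^ m * b ^ (m + d) := by ring

section DoublyExponential

variable {u : ℕ → ℝ} {C : ℝ} {m : ℕ}

lemma le_exp_neg_pow_div_of_le_mul_pow (hC : 1 ≤ C) (hm : 2 ≤ m) (hu : ∀ n, 0 ≤ u n)
    (hrec : ∀ n, u (n + 1) ≤ C * u n ^ m) {T : ℕ} (hT : u T ≤ exp (-1) / C) (s : ℕ) :
    u (T + s) ≤ exp (-(m : ℝ) ^ s) / C := by
  have hC0 : 0 < C := by linarith
  induction s with
  | zero => simpa using hT
  | succ s ih =>
    have hCm : C ≤ C ^ (m - 1) := le_self_pow₀ hC (by omega)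
    calc u (T + (s + 1)) ≤ C * u (T + s) ^ m := hrec (T + s)
      _ ≤ C * (exp (-(m : ℝ) ^ s) / C) ^ m := by gcongr; exact hu _
      _ = exp (-(m : ℝ) ^ (s + 1)) / C ^ (m - 1) := by
          have hCpow : C ^ m = C * C ^ (m - 1) := by
            rw [← pow_succ', Nat.sub_add_cancel (by omega)]
          rw [div_pow, ← exp_nat_mul, hCpow, pow_succ]
          field_simp
      _ ≤ exp (-(m : ℝ) ^ (s + 1)) / C := by gcongr

lemma exists_le_exp_neg_mul_pow (hC : 1 ≤ C) (hm : 2 ≤ m) (hu : ∀ n, 0 ≤ u n)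
    (hrec : ∀ n, u (n + 1) ≤ C * u n ^ m) (hlim : Tendsto u atTop (𝓝 0)) :
    ∃ c : ℝ, 0 < c ∧ ∃ T : ℕ, ∀ t : ℕ, T ≤ t → u t ≤ exp (-c * (m : ℝ) ^ t) := by
  obtain ⟨T, hT⟩ := (hlim.eventually (gt_mem_nhds (by positivity : 0 < exp (-1) / C))).exists
  refine ⟨((m : ℝ) ^ T)⁻¹, by positivity, T, fun t ht => ?_⟩
  obtain ⟨s, rfl⟩ := Nat.exists_eq_add_of_le ht
  calc u (T + s) ≤ exp (-(m : ℝ) ^ s) / C :=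
        le_exp_neg_pow_div_of_le_mul_pow hC hm hu hrec hT.le s
    _ ≤ exp (-(m : ℝ) ^ s) := div_le_self (exp_pos _).le hC
    _ = exp (-((m : ℝ) ^ T)⁻¹ * (m : ℝ) ^ (T + s)) := by
        rw [pow_add, ← mul_assoc, neg_mul, inv_mul_cancel₀ (by positivity), neg_one_mul]

end DoublyExponential

section MajorityRule

variable {k : ℕ}

def countTrue (σ : Fin k → Bool) : ℕ := #{i | σ i = true}

lemma countTrue_le (σ : Fin k → Bool) : countTrue σ ≤ k :=
  (card_filter_le _ _).trans_eq (by simp)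

lemma countTrue_compl (σ : Fin k → Bool) : countTrue σᶜ = k - countTrue σ := by
  have h := card_filter_add_card_filter_not (s := univ) (fun i => σ i = true)
  simp only [card_univ, Fintype.card_fin, Bool.not_eq_true] at h
  simp only [countTrue, Pi.compl_apply, Bool.compl_eq_bnot, Bool.not_eq_true']
  omega

lemma majKernel_true (σ : Fin k → Bool) : majKernel k σ true =
    if k < 2 * countTrue σ then 1 else if 2 * countTrue σ < k then 0 else 1 / 2 := rfl

lemma majKernel_not (σ : Fin k → Bool) (b : Bool) :
    majKernel k σ (!b) = 1 - majKernel k σ b := by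
  cases b <;> simp only [majKernel, Bool.not_true, Bool.not_false] <;> split_ifs <;> simp_all <;>
    norm_num

lemma majKernel_compl (σ : Fin k → Bool) (b : Bool) : majKernel k σᶜ b = majKernel k σ (!b) := by
  have h := countTrue_compl σ
  have hle := countTrue_le σ
  simp only [countTrue] at h hle
  cases b <;> simp only [majKernel, h, Bool.not_true, Bool.not_false] <;> split_ifs <;>
    simp_all <;> omega

lemma majKernel_compl_true (σ : Fin k → Bool) :
    majKernel k σᶜ true = 1 - majKernel k σ true := by
  rw [majKernel_compl, majKernel_not]

end MajorityRule

noncomputable section ErrorRecursion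

variable {k : ℕ}

lemma sum_pSig (q : ℝ) (s : Bool) : ∑ b, pSig q s b = 1 := by
  cases s <;> simp [pSig]

lemma pSig_not_not (q : ℝ) (s b : Bool) : pSig q (!s) (!b) = pSig q s b := by
  cases s <;> cases b <;> rfl

def bernProb (q : ℝ) (σ : Fin k → Bool) : ℝ := ∏ i, pSig q false (σ i)

lemma bernProb_eq (q : ℝ) (σ : Fin k → Bool) :
    bernProb q σ = q ^ countTrue σ * (1 - q) ^ (k - countTrue σ) := by
  have hσ : ∀ i, pSig q false (σ i) = if σ i = true then q else 1 - q := fun i => by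
    cases σ i <;> rfl
  rw [bernProb, prod_congr rfl fun i _ => hσ i, prod_ite, prod_const, prod_const,
    ← countTrue_compl]
  simp only [countTrue, Pi.compl_apply, Bool.compl_eq_bnot, Bool.not_eq_true', Bool.not_eq_true]

lemma bernProb_compl (q : ℝ) (σ : Fin k → Bool) :
    bernProb q σᶜ = q ^ (k - countTrue σ) * (1 - q) ^ countTrue σ := by
  rw [bernProb_eq, countTrue_compl, Nat.sub_sub_self (countTrue_le σ)]

lemma sum_bernProb_mul_apply (q : ℝ) (z : Fin k) :
    ∑ σ : Fin k → Bool, bernProb q σ * (if σ z then 1 else 0) = q := by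
  set g : Fin k → Bool → ℝ := fun i b => if i = z then pSig q false b * (if b then 1 else 0)
    else pSig q false b
  have hg : ∀ σ : Fin k → Bool, bernProb q σ * (if σ z then 1 else 0) = ∏ i, g i (σ i) := by
    intro σ
    rw [bernProb, ← mul_prod_erase univ _ (mem_univ z), ← mul_prod_erase univ _ (mem_univ z),
      prod_congr rfl fun i hi => if_neg (ne_of_mem_erase hi)]
    simp only [g, if_pos rfl]
    ring
  have hsum : ∀ i, ∑ b, g i b = if i = z then q else 1 := by
    intro i
    by_cases hi : i = z <;> simp [g, hi, pSig]
  simp only [hg, ← Fintype.prod_sum, hsum, prod_ite_eq', mem_univ, if_true]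

lemma sum_prod_pSig (q : ℝ) (s : Bool) : ∑ σ : Fin k → Bool, ∏ i, pSig q s (σ i) = 1 := by
  rw [← Fintype.sum_pow, sum_pSig, one_pow]

/-- The inputs are drawn from `pSig q false`, so `true` is the wrong message. -/
def majErr (k : ℕ) (q : ℝ) : ℝ := ∑ σ : Fin k → Bool, bernProb q σ * majKernel k σ true

lemma sum_prod_pSig_mul_majKernel_not (q : ℝ) (s : Bool) :
    ∑ σ : Fin k → Bool, (∏ i, pSig q s (σ i)) * majKernel k σ (!s) = majErr k q := by
  cases s
  · rfl
  · rw [← compl_bijective.sum_comp]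
    refine sum_congr rfl fun σ _ => ?_
    simp only [Pi.compl_apply, Bool.compl_eq_bnot, majKernel_compl, Bool.not_not, bernProb,
      ← pSig_not_not q false, Bool.not_false]

lemma sum_prod_pSig_mul_majKernel (q : ℝ) (s μ : Bool) :
    ∑ σ : Fin k → Bool, (∏ i, pSig q s (σ i)) * majKernel k σ μ = pSig (majErr k q) s μ := by
  rcases Bool.eq_or_eq_not μ s with rfl | rfl
  · have hμ : ∀ σ : Fin k → Bool, majKernel k σ μ = 1 - majKernel k σ (!μ) := fun σ => by
      rw [majKernel_not]; ring
    simp only [hμ, mul_sub, mul_one, sum_sub_distrib, sum_prod_pSig,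
      sum_prod_pSig_mul_majKernel_not]
    simp [pSig]
  · rw [sum_prod_pSig_mul_majKernel_not]
    cases s <;> rfl

lemma msgDist_majTree (δ : ℝ) (s : Bool) (t : ℕ) :
    msgDist (pSig δ s) (majTree k t) = pSig ((majErr k)^[t] δ) s := by
  induction t with
  | zero =>
    funext μ
    simp [msgDist, majTree]
  | succ t ih =>
    funext μ
    simp only [msgDist, majTree, ih, sum_prod_pSig_mul_majKernel, Function.iterate_succ_apply']

lemma rootErr_majTree (δ : ℝ) (t : ℕ) :
    rootErr δ t (majKernel k) (fun _ => majTree k t) = (majErr k)^[t + 1] δ := by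
  simp only [rootErr, msgDist_majTree, sum_prod_pSig_mul_majKernel, Function.iterate_succ_apply']
  norm_num [pSig]
  ring

end ErrorRecursion

noncomputable section Pairing

variable {k : ℕ} {q : ℝ}

/-- On each complementary pair `{σ, σᶜ}` majority answers `true` on the less likely pattern,
so its error there is at most that of any rule answering `true` on `σ` with probability `x`. -/
lemma sub_bernProb_compl_mul_sub_majKernel_nonneg (hq0 : 0 ≤ q) (hq : q ≤ 1 / 2)
    (σ : Fin k → Bool) {x : ℝ} (hx0 : 0 ≤ x) (hx1 : x ≤ 1) :
    0 ≤ (bernProb q σ - bernProb q σᶜ) * (x - majKernel k σ true) := by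
  have hle := countTrue_le σ
  have hqq : q ≤ 1 - q := by linarith
  rw [bernProb_eq, bernProb_compl]
  rcases lt_trichotomy (2 * countTrue σ) k with hlt | heq | hgt
  · have hw : majKernel k σ true = 0 := by rw [majKernel_true, if_neg (by omega), if_pos hlt]
    have := pow_mul_pow_le_pow_mul_pow hq0 hqq (show countTrue σ ≤ k - countTrue σ by omega)
    rw [hw]
    exact mul_nonneg (by linarith) (by linarith)
  · rw [show k - countTrue σ = countTrue σ by omega, sub_self, zero_mul]
  · have hw : majKernel k σ true = 1 := by rw [majKernel_true, if_pos hgt]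
    have := pow_mul_pow_le_pow_mul_pow hq0 hqq (show k - countTrue σ ≤ countTrue σ by omega)
    rw [hw]
    exact mul_nonneg_of_nonpos_of_nonpos (by linarith) (by linarith)

lemma two_mul_sub_majErr_eq_sum (f : (Fin k → Bool) → ℝ) (hf : ∀ σ, f σᶜ = 1 - f σ) :
    2 * (∑ σ, bernProb q σ * f σ - majErr k q) =
      ∑ σ, (bernProb q σ - bernProb q σᶜ) * (f σ - majKernel k σ true) := by
  have hcompl : ∑ σ, bernProb q σᶜ * (f σ - majKernel k σ true) =
      -∑ σ, bernProb q σ * (f σ - majKernel k σ true) := by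
    rw [← compl_bijective.sum_comp, ← sum_neg_distrib]
    refine sum_congr rfl fun σ _ => ?_
    rw [compl_compl, hf, majKernel_compl_true]
    ring
  simp only [sub_mul _ _ (_ - _), sum_sub_distrib (f := fun σ => bernProb q σ * _), hcompl]
  simp only [majErr, mul_sub, sum_sub_distrib]
  ring

/-- Majority beats every self-dual rule `f`, by at least its gain on any one complementary
pair (summing the previous lemma over all pairs). -/
lemma majErr_le_sum_sub (hq0 : 0 ≤ q) (hq : q ≤ 1 / 2) (f : (Fin k → Bool) → ℝ)
    (hf : ∀ σ, f σᶜ = 1 - f σ) (hf01 : ∀ σ, 0 ≤ f σ ∧ f σ ≤ 1) (σ₀ : Fin k → Bool)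
    (hσ₀ : σ₀ᶜ ≠ σ₀) :
    majErr k q ≤ ∑ σ, bernProb q σ * f σ -
      (bernProb q σ₀ - bernProb q σ₀ᶜ) * (f σ₀ - majKernel k σ₀ true) := by
  set gain : (Fin k → Bool) → ℝ :=
    fun σ => (bernProb q σ - bernProb q σᶜ) * (f σ - majKernel k σ true)
  have hgain : ∀ σ, 0 ≤ gain σ := fun σ =>
    sub_bernProb_compl_mul_sub_majKernel_nonneg hq0 hq σ (hf01 σ).1 (hf01 σ).2
  have hgain_compl : gain σ₀ᶜ = gain σ₀ := by
    simp only [gain, compl_compl, hf, majKernel_compl_true]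
    ring
  have hpair : gain σ₀ + gain σ₀ᶜ ≤ ∑ σ, gain σ := by
    rw [← sum_pair hσ₀.symm]
    exact sum_le_sum_of_subset_of_nonneg (subset_univ _) fun σ _ _ => hgain σ
  have := two_mul_sub_majErr_eq_sum (q := q) f hf
  linarith

lemma majErr_le_sub_of_dictator (hq0 : 0 ≤ q) (hq : q ≤ 1 / 2) (z : Fin k)
    (σ₀ : Fin k → Bool) :
    majErr k q ≤ q -
      (bernProb q σ₀ - bernProb q σ₀ᶜ) * ((if σ₀ z then 1 else 0) - majKernel k σ₀ true) := by
  have hσ₀ : σ₀ᶜ ≠ σ₀ := fun h => by simpa using congrFun h z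
  have h := majErr_le_sum_sub hq0 hq (fun σ => if σ z then 1 else 0)
    (fun σ => by cases h : σ z <;> simp [h]) (fun σ => by split_ifs <;> norm_num) σ₀ hσ₀
  rwa [sum_bernProb_mul_apply] at h

lemma majErr_le_self (hq0 : 0 ≤ q) (hq : q ≤ 1 / 2) (hk : 0 < k) : majErr k q ≤ q :=
  (majErr_le_sub_of_dictator hq0 hq ⟨0, hk⟩ fun _ => true).trans <| sub_le_self _ <|
    sub_bernProb_compl_mul_sub_majKernel_nonneg hq0 hq _ (by split_ifs <;> norm_num)
      (by split_ifs <;> norm_num)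

/-- The subtracted term is the gain of majority over the dictator on the pair of patterns
with exactly one wrong input, resp. exactly one right input. -/
lemma majErr_le_sub_pow (hq0 : 0 ≤ q) (hq : q ≤ 1 / 2) (hk : 3 ≤ k) :
    majErr k q ≤ q - (q * (1 - q) ^ (k - 1) - q ^ (k - 1) * (1 - q)) := by
  set z : Fin k := ⟨0, by omega⟩
  set σ₀ : Fin k → Bool := fun i => decide (i = z)
  have hcount : countTrue σ₀ = 1 := by simp [countTrue, σ₀, filter_eq']
  have hmaj : majKernel k σ₀ true = 0 := by
    rw [majKernel_true, hcount, if_neg (by omega), if_pos (by omega)]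
  have hz : σ₀ z = true := by simp [σ₀]
  have h := majErr_le_sub_of_dictator hq0 hq z σ₀
  rwa [bernProb_eq, bernProb_compl, hmaj, hcount, hz, if_pos rfl, pow_one, pow_one,
    sub_zero, mul_one] at h

end Pairing

noncomputable section MajErrBounds

variable {k : ℕ} {q : ℝ}

lemma majErr_nonneg (hq0 : 0 ≤ q) (hq1 : q ≤ 1) : 0 ≤ majErr k q := by
  refine sum_nonneg fun σ _ => mul_nonneg ?_ ?_
  · rw [bernProb_eq]
    exact mul_nonneg (pow_nonneg hq0 _) (pow_nonneg (by linarith) _)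
  · rw [majKernel_true]
    split_ifs <;> norm_num

/-- Majority errs only if at least `⌊(k+1)/2⌋` of its inputs do. -/
lemma majErr_le_two_pow_mul_pow (hq0 : 0 ≤ q) (hq1 : q ≤ 1) :
    majErr k q ≤ 2 ^ k * q ^ ((k + 1) / 2) := by
  have hterm : ∀ σ : Fin k → Bool, bernProb q σ * majKernel k σ true ≤ q ^ ((k + 1) / 2) := by
    intro σ
    have hP : 0 ≤ bernProb q σ := by
      rw [bernProb_eq]; exact mul_nonneg (pow_nonneg hq0 _) (pow_nonneg (by linarith) _)
    by_cases hc : (k + 1) / 2 ≤ countTrue σ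
    · calc bernProb q σ * majKernel k σ true ≤ bernProb q σ * 1 := by
            gcongr; rw [majKernel_true]; split_ifs <;> norm_num
        _ = q ^ countTrue σ * (1 - q) ^ (k - countTrue σ) := by rw [mul_one, bernProb_eq]
        _ ≤ q ^ ((k + 1) / 2) * 1 := by
            apply mul_le_mul (pow_le_pow_of_le_one hq0 hq1 hc)
              (pow_le_one₀ (by linarith) (by linarith)) (by positivity) (by positivity)
        _ = q ^ ((k + 1) / 2) := mul_one _
    · rw [majKernel_true, if_neg (by omega), if_pos (by omega), mul_zero]
      positivity
  calc majErr k q ≤ ∑ _σ : Fin k → Bool, q ^ ((k + 1) / 2) := sum_le_sum fun σ _ => hterm σ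
    _ = 2 ^ k * q ^ ((k + 1) / 2) := by simp

end MajErrBounds

noncomputable section Iteration

variable {k : ℕ} {δ : ℝ}

lemma mapsTo_majErr_Icc (hδ : δ ≤ 1 / 2) (hk : 0 < k) :
    Set.MapsTo (majErr k) (Set.Icc 0 δ) (Set.Icc 0 δ) := fun _ ⟨hq0, hqδ⟩ =>
  ⟨majErr_nonneg hq0 (by linarith), (majErr_le_self hq0 (by linarith) hk).trans hqδ⟩

lemma majErr_le_mul_self (hδ : δ < 1 / 2) (hk : 3 ≤ k) {q : ℝ} (hq0 : 0 ≤ q) (hqδ : q ≤ δ) :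
    majErr k q ≤ (1 - ((1 - δ) ^ (k - 2) - δ ^ (k - 2)) / 2) * q := by
  have hgap : q * (1 - q) ^ (k - 1) - q ^ (k - 1) * (1 - q) =
      q * (1 - q) * ((1 - q) ^ (k - 2) - q ^ (k - 2)) := by
    rw [show k - 1 = k - 2 + 1 by omega, pow_succ, pow_succ]; ring
  have hδpow : δ ^ (k - 2) ≤ (1 - δ) ^ (k - 2) :=
    pow_le_pow_left₀ (hq0.trans hqδ) (by linarith) _
  have hspread : (1 - δ) ^ (k - 2) - δ ^ (k - 2) ≤ (1 - q) ^ (k - 2) - q ^ (k - 2) := by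
    have := pow_le_pow_left₀ (by linarith) (by linarith : 1 - δ ≤ 1 - q) (k - 2)
    have := pow_le_pow_left₀ hq0 hqδ (k - 2)
    linarith
  have hhalf : 1 / 2 * ((1 - δ) ^ (k - 2) - δ ^ (k - 2)) ≤
      (1 - q) * ((1 - q) ^ (k - 2) - q ^ (k - 2)) :=
    mul_le_mul (by linarith) hspread (by linarith) (by linarith)
  have := majErr_le_sub_pow hq0 (by linarith) hk
  rw [hgap] at this
  nlinarith [mul_le_mul_of_nonneg_left hhalf hq0]

lemma tendsto_iterate_majErr (hδ₀ : 0 ≤ δ) (hδ : δ < 1 / 2) (hk : 3 ≤ k) :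
    Tendsto (fun t => (majErr k)^[t] δ) atTop (𝓝 0) := by
  set r := 1 - ((1 - δ) ^ (k - 2) - δ ^ (k - 2)) / 2 with hr
  have hδpow : δ ^ (k - 2) < (1 - δ) ^ (k - 2) :=
    pow_lt_pow_left₀ (by linarith) hδ₀ (by omega)
  have hr0 : 0 ≤ r := by
    have := pow_le_one₀ (by linarith : 0 ≤ 1 - δ) (by linarith) (n := k - 2)
    have := pow_nonneg hδ₀ (k - 2)
    linarith
  have hr1 : r < 1 := by linarith
  have hmem := fun t => (mapsTo_majErr_Icc (k := k) hδ.le (by omega)).iterate t ⟨hδ₀, le_rfl⟩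
  have hgeom : ∀ t, (majErr k)^[t] δ ≤ δ * r ^ t := by
    intro t
    induction t with
    | zero => simp
    | succ t ih =>
      rw [Function.iterate_succ_apply']
      calc majErr k ((majErr k)^[t] δ) ≤ r * (majErr k)^[t] δ :=
            majErr_le_mul_self hδ hk (hmem t).1 (hmem t).2
        _ ≤ r * (δ * r ^ t) := mul_le_mul_of_nonneg_left ih hr0
        _ = δ * r ^ (t + 1) := by ring
  have hlim : Tendsto (fun t => δ * r ^ t) atTop (𝓝 0) := by
    simpa using (tendsto_pow_atTop_nhds_zero_of_lt_one hr0 hr1).const_mul δ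
  exact tendsto_of_tendsto_of_tendsto_of_le_of_le tendsto_const_nhds hlim
    (fun t => (hmem t).1) hgeom

end Iteration

/-- **Majority protocol upper bound.**  Fix `δ ∈ (0,1/2)` and `k ≥ 1`.  For the
protocol in which every leaf forwards its private signal and every internal node
(including the root) takes the majority of its children's messages with ties broken
uniformly at random, there is a constant `c > 0` (depending on `δ` and `k`) such that
for all sufficiently large depth `t + 1`,
`P(σ_root ≠ s) ≤ exp (-c ⌊(k+1)/2⌋ ^ (t+1))`. -/
theorem majority_error_upper_bound (δ : ℝ) (hδ₀ : 0 < δ) (hδ₁ : δ < 1 / 2)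
    (k : ℕ) (hk : 1 ≤ k) :
    ∃ c : ℝ, 0 < c ∧ ∃ T : ℕ, ∀ t : ℕ, T ≤ t →
      rootErr δ t (majKernel k) (fun _ => majTree k t) ≤
        Real.exp (-c * (((k + 1) / 2 : ℕ) : ℝ) ^ (t + 1)) := by
  have hmem := fun t => (mapsTo_majErr_Icc (k := k) hδ₁.le hk).iterate t ⟨hδ₀.le, le_rfl⟩
  simp only [rootErr_majTree]
  rcases le_or_gt k 2 with hk2 | hk3
  · refine ⟨-log δ, neg_pos.2 (log_neg hδ₀ (by linarith)), 0, fun t _ => ?_⟩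
    rw [show (k + 1) / 2 = 1 by omega, Nat.cast_one, one_pow, mul_one, neg_neg, exp_log hδ₀]
    exact (hmem (t + 1)).2
  · obtain ⟨c, hc, T, hT⟩ := exists_le_exp_neg_mul_pow (u := fun t => (majErr k)^[t] δ)
      (m := (k + 1) / 2)
      (one_le_pow₀ one_le_two) (by omega) (fun t => (hmem t).1)
      (fun t => by
        rw [Function.iterate_succ_apply']
        exact majErr_le_two_pow_mul_pow (hmem t).1 (by linarith [(hmem t).2]))
      (tendsto_iterate_majErr hδ₀.le hδ₁ hk3)
    exact ⟨c, hc, T, fun t ht => hT (t + 1) (by omega)⟩
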